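/- arXiv:2310.04634 — 5 statements merged into one kernel-verified Lean document; each statement's English description precedes it below -/
import Mathlib

section
/- For every finite nonempty poset P, the cube-width satisfies w*(P) ≤ h*(P)·w(P), where w(P) denotes the size of the largest antichain in P. -/
/-- The first `h + 1` layers of the cube `Q_n` (i.e. the subsets of `[n]` of
size at most `h`, ordered by inclusion) contain an induced copy of `P`. -/
def EmbedsLow (P : Type*) [PartialOrder P] (n h : ℕ) : Prop :=
  ∃ f : P → Finset (Fin n), Function.Injective f ∧ (∀ p, (f p).card ≤ h) ∧
    ∀ p q, p ≤ q ↔ f p ⊆ f q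

/-- The cube-height `h*(P)`: the least `h` such that for some `n` the subsets
of `[n]` of size at most `h` contain an induced copy of `P`. -/
noncomputable def cubeHeight (P : Type*) [PartialOrder P] : ℕ :=
  sInf {h | ∃ n, EmbedsLow P n h}

/-- The cube-width `w*(P)`: the least `w` such that the subsets of `[w]` of
size at most `h*(P)` contain an induced copy of `P`. -/
noncomputable def cubeWidth (P : Type*) [PartialOrder P] : ℕ :=
  sInf {w | EmbedsLow P w (cubeHeight P)}

/-- The width `w(P)` of a poset: the maximum size of an antichain in `P`. -/
noncomputable def posetWidth (P : Type*) [PartialOrder P] [Fintype P] : ℕ :=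
  sSup {s | ∃ A : Finset P, IsAntichain (· ≤ ·) (A : Set P) ∧ A.card = s}

/-!
Embed `P` into the cube at height `h = h*(P)`. Every element lies below a maximal one, and
the maximal elements form an antichain, so all the sets used by the embedding lie inside the
union of the at most `w(P)` sets assigned to maximal elements, a ground set of size at most
`h * w(P)`. Restricting the embedding to that ground set keeps it an induced copy of `P`.
-/

open Finset

section

variable {P : Type*} [PartialOrder P]

lemma EmbedsLow.of_orderEmbedding {n h : ℕ} (f : P ↪o Finset (Fin n))
    (hf : ∀ p, #(f p) ≤ h) : EmbedsLow P n h :=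
  ⟨f, f.injective, hf, fun _ _ => f.le_iff_le.symm⟩

lemma EmbedsLow.exists_orderEmbedding {n h : ℕ} (hP : EmbedsLow P n h) :
    ∃ f : P ↪o Finset (Fin n), ∀ p, #(f p) ≤ h :=
  let ⟨f, _, hf, hle⟩ := hP
  ⟨OrderEmbedding.ofMapLEIff f fun p q => (hle p q).symm, hf⟩

lemma EmbedsLow.of_forall_subset_of_card_le {α : Type*} {n h : ℕ} (f : P ↪o Finset α)
    (hf : ∀ p, #(f p) ≤ h) (U : Finset α) (hfU : ∀ p, f p ⊆ U) (hU : #U ≤ n) :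
    EmbedsLow P n h := by
  classical
  obtain ⟨e⟩ : Nonempty (U ↪ Fin n) :=
    Function.Embedding.nonempty_of_card_le (by simpa using hU)
  have hsub : ∀ p, ((f p).subtype (· ∈ U)).map (Function.Embedding.subtype _) = f p :=
    fun p => subtype_map_of_mem (hfU p)
  let restrict : Finset α →o Finset U := ⟨Finset.subtype (· ∈ U), subtype_mono⟩
  refine .of_orderEmbedding (OrderEmbedding.ofMapLEIff
    (fun p => (mapEmbedding e) (restrict (f p))) fun p q => ?_) fun p => ?_
  · rw [OrderEmbedding.le_iff_le, ← f.le_iff_le]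
    refine ⟨fun hpq => ?_, fun hpq => restrict.monotone hpq⟩
    rw [← hsub p, ← hsub q]
    exact map_subset_map.2 hpq
  · calc #((mapEmbedding e) (restrict (f p))) = #((f p).subtype (· ∈ U)) := card_map e
      _ ≤ #(f p) := (card_subtype _ _).trans_le (card_filter_le _ _)
      _ ≤ h := hf p

lemma exists_embedsLow [Fintype P] : ∃ h n, EmbedsLow P n h := by
  classical
  let downset : P ↪o Finset P := OrderEmbedding.ofMapLEIff (fun p => univ.filter (· ≤ p))
    fun p q => ⟨fun hpq => by simpa using hpq (by simp : p ∈ univ.filter (· ≤ p)),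
      fun hpq x hx => by simp only [mem_filter, mem_univ, true_and] at hx ⊢; exact hx.trans hpq⟩
  let e : Finset P ↪o Finset (Fin (Fintype.card P)) :=
    mapEmbedding (Fintype.equivFin P).toEmbedding
  exact ⟨Fintype.card P, Fintype.card P, .of_forall_subset_of_card_le (downset.trans e)
    (fun p => (card_map _).trans_le (card_le_univ (downset p))) univ (fun _ => subset_univ _)
    (by simp)⟩

lemma exists_embedsLow_cubeHeight [Fintype P] : ∃ n, EmbedsLow P n (cubeHeight P) :=
  Nat.sInf_mem (exists_embedsLow (P := P))

lemma IsAntichain.card_le_posetWidth [Fintype P] {A : Finset P}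
    (hA : IsAntichain (· ≤ ·) (A : Set P)) : #A ≤ posetWidth P :=
  le_csSup ⟨Fintype.card P, by rintro _ ⟨B, -, rfl⟩; exact card_le_univ B⟩ ⟨A, hA, rfl⟩

lemma EmbedsLow.mul_posetWidth [Fintype P] {n h : ℕ} (hP : EmbedsLow P n h) :
    EmbedsLow P (h * posetWidth P) h := by
  classical
  obtain ⟨f, hf⟩ := hP.exists_orderEmbedding
  let M : Finset P := {p | Maximal (fun _ => True) p}.toFinset
  have hM : #M ≤ posetWidth P := IsAntichain.card_le_posetWidth <| by
    simpa [M] using setOfPred_maximal_antichain (fun _ : P => True)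
  refine .of_forall_subset_of_card_le f hf (M.biUnion f) (fun p => ?_) ?_
  · obtain ⟨m, hpm, hm⟩ := Finite.exists_le_maximal (p := fun _ : P => True) (a := p) trivial
    exact (f.monotone hpm).trans (subset_biUnion_of_mem f (by simpa [M] using hm))
  · calc #(M.biUnion f) ≤ ∑ m ∈ M, #(f m) := card_biUnion_le
      _ ≤ #M * h := sum_le_card_nsmul _ _ _ fun m _ => hf m
      _ ≤ h * posetWidth P := by rw [mul_comm]; exact Nat.mul_le_mul_left h hM

end

theorem cubeWidth_le_cubeHeight_mul_width_general (P : Type*) [PartialOrder P] [Fintype P] :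
    cubeWidth P ≤ cubeHeight P * posetWidth P := by
  obtain ⟨n, hP⟩ := exists_embedsLow_cubeHeight (P := P)
  exact Nat.sInf_le hP.mul_posetWidth

/-- For every finite nonempty poset `P`, `w*(P) ≤ h*(P)·w(P)`, where `w(P)`
is the size of the largest antichain in `P`. -/
theorem cubeWidth_le_cubeHeight_mul_width (P : Type*) [PartialOrder P] [Fintype P] [Nonempty P] :
    cubeWidth P ≤ cubeHeight P * posetWidth P :=
  cubeWidth_le_cubeHeight_mul_width_general P
end

section
/- Let n ≥ 2 and let F be a family of subsets of [n] such that for every i ∈ [n] there exist sets A, B ∈ F with A \ B = {i}. Then |F| ≥ 2·√(n − 2). -/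
/-!
Pick `A i, B i ∈ F` with `A i \ B i = {i}` and view the pairs as `n` distinct arcs `A i → B i` of a
digraph on the `m = |F|` vertices `F`. No arc can be bypassed by a directed path through the other
arcs, because along an arc `A j → B j` with `j ≠ i` the element `i` is never lost.

Such an irredundant digraph has at most `max (2m - 2) (m² / 4)` arcs. If it is acyclic, no three
vertices span a triangle (it would be a directed cycle or would contain a bypass), so Mantel's
theorem bounds the arcs by `m² / 4`. Otherwise it contains a cycle without chords, found as a
periodic orbit of a successor function; contracting that cycle of length `k` to a single vertex
removes `k` arcs and `k - 1` vertices and keeps the digraph irredundant, and induction on `m`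
finishes. Finally `n ≤ max (2m - 2) (m² / 4) ≤ m² / 4 + 2`.
-/

open Finset Relation Function

theorem Relation.ReflTransGen.iterate {α : Type*} {r : α → α → Prop} {s : α → α} {S : Set α}
    (hs : ∀ z ∈ S, s z ∈ S ∧ r z (s z)) {a : α} (ha : a ∈ S) (k : ℕ) :
    ReflTransGen r a (s^[k] a) := by
  induction k with
  | zero => exact .refl
  | succ k ih =>
    rw [iterate_succ_apply']
    exact ih.tail (hs _ (Set.MapsTo.iterate (fun z hz => (hs z hz).1) k ha)).2

theorem Relation.TransGen.of_map {α β : Type*} {r : α → α → Prop} {r' : β → β → Prop} {g : α → β}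
    (hlift : ∀ p q, r' p q → ∃ c d, g c = p ∧ g d = q ∧ r c d)
    (hfib : ∀ u v, g u = g v → ReflTransGen r u v) {a b : α}
    (h : TransGen r' (g a) (g b)) : TransGen r a b := by
  suffices ∀ p q, TransGen r' p q → ∀ a, g a = p → ∃ d, g d = q ∧ TransGen r a d by
    obtain ⟨d, hd, had⟩ := this _ _ h a rfl
    exact had.trans_left (hfib d b hd)
  intro p q h
  induction h with
  | single hpq =>
    intro a ha
    obtain ⟨c, d, hc, rfl, hcd⟩ := hlift _ _ hpq
    exact ⟨d, rfl, .tail' (hfib a c (ha.trans hc.symm)) hcd⟩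
  | tail _ hqq ih =>
    intro a ha
    obtain ⟨d, hd, had⟩ := ih a ha
    obtain ⟨c, d', hc, rfl, hcd⟩ := hlift _ _ hqq
    exact ⟨d', rfl, .tail (had.trans_left (hfib d c (hd.trans hc.symm))) hcd⟩

theorem SimpleGraph.CliqueFree.four_mul_card_edgeFinset_le {W : Type*} [Fintype W]
    {G : SimpleGraph W} [DecidableRel G.Adj] (h : G.CliqueFree 3) :
    4 * #G.edgeFinset ≤ Fintype.card W ^ 2 := by
  have hturan := h.card_edgeFinset_le (r := 2)
  norm_num [Nat.choose_eq_zero_of_lt (Nat.mod_lt _ two_pos)] at hturan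
  calc 4 * #G.edgeFinset ≤ 4 * ((Fintype.card W ^ 2 - (Fintype.card W % 2) ^ 2) / 4) := by
        gcongr
    _ ≤ Fintype.card W ^ 2 := (Nat.mul_div_le _ _).trans (Nat.sub_le _ _)

namespace ArcSet

variable {α : Type*} {V S : Finset α} {E : Finset (α × α)}

abbrev Adj (E : Finset (α × α)) (a b : α) : Prop := (a, b) ∈ E

theorem exists_periodic_succ (hE : E ⊆ V.offDiag) {x : α} (hx : TransGen (Adj E) x x) :
    ∃ (s : α → α) (y : α) (p : ℕ), 0 < p ∧ IsPeriodicPt s p y ∧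
      ∀ k, (s^[k] y, s (s^[k] y)) ∈ E := by
  have hnext : ∀ y, TransGen (Adj E) y y → ∃ z, (y, z) ∈ E ∧ TransGen (Adj E) z z := by
    intro y hy
    obtain ⟨z, hyz, hzy⟩ := TransGen.head'_iff.1 hy
    exact ⟨z, hyz, .tail' hzy hyz⟩
  choose! s hs using hnext
  have horbit (k : ℕ) : TransGen (Adj E) (s^[k] x) (s^[k] x) :=
    Set.MapsTo.iterate (fun y hy => (hs y hy).2) k hx
  obtain ⟨i, -, j, -, hij, heq⟩ := exists_ne_map_eq_of_card_lt_of_maps_to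
    (s := range (#V + 1)) (t := V) (f := (s^[·] x)) (by simp)
    fun k _ => (mem_offDiag.1 (hE (hs _ (horbit k)).1)).1
  wlog hlt : i < j generalizing i j
  · exact this j i hij.symm heq.symm (by omega)
  refine ⟨s, s^[i] x, j - i, by omega, ?_, fun k => ?_⟩
  · rw [IsPeriodicPt, IsFixedPt, ← iterate_add_apply, Nat.sub_add_cancel hlt.le, ← heq]
  · rw [← iterate_add_apply]
    exact (hs _ (horbit _)).1

variable [DecidableEq α]

def Irredundant (E : Finset (α × α)) : Prop :=
  ∀ e ∈ E, ¬ TransGen (Adj (E.erase e)) e.1 e.2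

def StronglyConnectedOn (E : Finset (α × α)) (S : Finset α) : Prop :=
  ∀ a ∈ S, ∀ b ∈ S, ReflTransGen (Adj (E ∩ S ×ˢ S)) a b

theorem Irredundant.four_mul_card_le_sq_of_acyclic (hE : E ⊆ V.offDiag) (hirr : Irredundant E)
    (hacyc : ∀ x, ¬ TransGen (Adj E) x x) : 4 * #E ≤ #V ^ 2 := by
  classical
  let G : SimpleGraph V := SimpleGraph.fromRel fun x y => (x.1, y.1) ∈ E
  have hne : ∀ {a b}, (a, b) ∈ E → a ≠ b := fun h => (mem_offDiag.1 (hE h)).2.2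
  have htrans : ∀ {a b c}, (a, b) ∈ E → (b, c) ∈ E → (a, c) ∈ E → False := fun hab hbc hac =>
    hirr _ hac (.tail (.single (mem_erase.2 ⟨by simp [hne hbc], hab⟩))
      (mem_erase.2 ⟨by simp [(hne hab).symm], hbc⟩))
  have hcyc : ∀ {a b c}, (a, b) ∈ E → (b, c) ∈ E → (c, a) ∈ E → False := fun hab hbc hca =>
    hacyc _ (.tail (.tail (.single hab) hbc) hca)
  have hfree : G.CliqueFree 3 := by
    intro t ht
    obtain ⟨a, b, c, ⟨-, hab⟩, ⟨-, hac⟩, ⟨-, hbc⟩, -⟩ := SimpleGraph.is3Clique_iff.1 ht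
    rcases hab with hab | hab <;> rcases hac with hac | hac <;> rcases hbc with hbc | hbc <;>
      first
      | exact htrans hab hbc hac | exact htrans hac hbc hab | exact htrans hbc hab hac
      | exact htrans hab hac hbc | exact htrans hbc hac hab | exact htrans hac hab hbc
      | exact hcyc hab hbc hac | exact hcyc hac hbc hab
  have hcard : #E ≤ #G.edgeFinset := by
    rw [← card_map (Function.Embedding.subtype (· ∈ V)).sym2Map]
    refine card_le_card_of_injOn (fun e => s(e.1, e.2)) (fun e he => ?_) fun e he e' he' h => ?_
    · obtain ⟨h1, h2, h12⟩ := mem_offDiag.1 (hE he)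
      refine mem_map.2 ⟨s(⟨e.1, h1⟩, ⟨e.2, h2⟩), ?_, rfl⟩
      simpa [G, h12] using Or.inl he
    · rcases Sym2.eq_iff.1 h with ⟨h1, h2⟩ | ⟨h1, h2⟩
      · exact Prod.ext h1 h2
      · refine (hacyc e.1 (.tail (.single (b := e.2) he) ?_)).elim
        rw [h1, h2]
        exact he'
  calc 4 * #E ≤ 4 * #G.edgeFinset := by gcongr
    _ ≤ Fintype.card V ^ 2 := hfree.four_mul_card_edgeFinset_le
    _ = #V ^ 2 := by rw [Fintype.card_coe]

-- A chord `a → b` of the orbit would be bypassed by `a → s a ⇝ b`.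
theorem Irredundant.eq_succ_of_mem (hirr : Irredundant E) {s : α → α}
    (hs : ∀ z ∈ S, s z ∈ S ∧ (z, s z) ∈ E) (hreach : ∀ a ∈ S, ∀ b ∈ S, ∃ k, s^[k] a = b)
    {a b : α} (hab : (a, b) ∈ E) (ha : a ∈ S) (hb : b ∈ S) : b = s a := by
  by_contra hne
  have hs' : ∀ z ∈ S, s z ∈ S ∧ (z, s z) ∈ E.erase (a, b) := fun z hz =>
    ⟨(hs z hz).1, mem_erase.2 ⟨fun h => by obtain ⟨rfl, rfl⟩ := Prod.mk.inj h; exact hne rfl,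
      (hs z hz).2⟩⟩
  obtain ⟨k, rfl⟩ := hreach _ (hs a ha).1 b hb
  exact hirr _ hab (.head' (hs' a ha).2 (ReflTransGen.iterate (S := ↑S) hs' (hs a ha).1 k))

theorem Irredundant.exists_cycle (hE : E ⊆ V.offDiag) (hirr : Irredundant E) {x : α}
    (hx : TransGen (Adj E) x x) :
    ∃ S ⊆ V, 2 ≤ #S ∧ #(E ∩ S ×ˢ S) ≤ #S ∧ StronglyConnectedOn E S := by
  obtain ⟨s, y, p, hp, hper, harc⟩ := exists_periodic_succ hE hx
  set S := (range p).image (s^[·] y)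
  have hmem (k : ℕ) : s^[k] y ∈ S :=
    mem_image.2 ⟨k % p, mem_range.2 (Nat.mod_lt _ hp), hper.iterate_mod_apply k⟩
  have hs : ∀ z ∈ S, s z ∈ S ∧ (z, s z) ∈ E := by
    intro z hz
    obtain ⟨k, -, rfl⟩ := mem_image.1 hz
    exact ⟨by simpa [← iterate_succ_apply'] using hmem (k + 1), harc k⟩
  have hreach : ∀ a ∈ S, ∀ b ∈ S, ∃ k, s^[k] a = b := by
    intro a ha b hb
    obtain ⟨i, hi, rfl⟩ := mem_image.1 ha
    obtain ⟨j, -, rfl⟩ := mem_image.1 hb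
    refine ⟨j + (p - i), ?_⟩
    rw [← iterate_add_apply, add_assoc, Nat.sub_add_cancel (mem_range.1 hi).le, iterate_add_apply,
      hper.eq]
  refine ⟨S, fun z hz => ?_, ?_, ?_, fun a ha b hb => ?_⟩
  · obtain ⟨k, -, rfl⟩ := mem_image.1 hz
    exact (mem_offDiag.1 (hE (harc k))).1
  · have hy : y ∈ S := hmem 0
    have hne : y ≠ s y := (mem_offDiag.1 (hE (harc 0))).2.2
    exact (card_pair hne).symm.trans_le
      (card_le_card (by simp [insert_subset_iff, hy, (hs y hy).1]))
  · calc #(E ∩ S ×ˢ S) ≤ #(S.image fun z => (z, s z)) := card_le_card fun e he => by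
          obtain ⟨heE, ha, hb⟩ := by simpa using he
          exact mem_image.2 ⟨e.1, ha, by rw [← hirr.eq_succ_of_mem hs hreach heE ha hb]⟩
      _ ≤ #S := card_image_le
  · obtain ⟨k, rfl⟩ := hreach a ha b hb
    exact ReflTransGen.iterate (r := Adj (E ∩ S ×ˢ S)) (S := ↑S)
      (fun z hz => ⟨(hs z hz).1, mem_inter.2 ⟨(hs z hz).2, mem_product.2 ⟨hz, (hs z hz).1⟩⟩⟩) ha k

def collapse (S : Finset α) (r x : α) : α := if x ∈ S then r else x

theorem collapse_eq_collapse {r : α} (hr : r ∈ S) {a b : α}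
    (h : collapse S r a = collapse S r b) : a = b ∨ a ∈ S ∧ b ∈ S := by
  unfold collapse at h
  split_ifs at h with ha hb hb <;> simp_all

theorem reflTransGen_erase_of_collapse_eq {r : α} (hr : r ∈ S)
    (hconn : StronglyConnectedOn E S)
    {e : α × α} (he : e ∉ S ×ˢ S) {u v : α}
    (huv : collapse S r u = collapse S r v) : ReflTransGen (Adj (E.erase e)) u v := by
  rcases collapse_eq_collapse hr huv with rfl | ⟨hu, hv⟩
  · exact .refl
  · exact ReflTransGen.mono (fun a b hab => mem_erase.2
      ⟨ne_of_mem_of_not_mem (mem_inter.1 hab).2 he, (mem_inter.1 hab).1⟩) _ _ (hconn u hu v hv)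

theorem Irredundant.injOn_collapse (hirr : Irredundant E) {r : α} (hr : r ∈ S)
    (hconn : StronglyConnectedOn E S) :
    Set.InjOn (Prod.map (collapse S r) (collapse S r)) ↑(E \ S ×ˢ S) := by
  intro e he e' he' h
  obtain ⟨heE, heS⟩ := mem_sdiff.1 he
  obtain ⟨h1, h2⟩ := Prod.ext_iff.1 h
  by_contra hne
  -- two outer arcs with the same image give a detour `e.1 ⇝ e'.1 → e'.2 ⇝ e.2` around `e`
  exact hirr e heE <| (TransGen.tail' (reflTransGen_erase_of_collapse_eq hr hconn heS h1)
    (mem_erase.2 ⟨Ne.symm hne, (mem_sdiff.1 he').1⟩)).trans_left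
    (reflTransGen_erase_of_collapse_eq hr hconn heS h2.symm)

theorem Irredundant.image_collapse (hirr : Irredundant E) {r : α} (hr : r ∈ S)
    (hconn : StronglyConnectedOn E S) :
    Irredundant ((E \ S ×ˢ S).image (Prod.map (collapse S r) (collapse S r))) := by
  intro e' he' hpath
  obtain ⟨e, he, rfl⟩ := mem_image.1 he'
  obtain ⟨heE, heS⟩ := mem_sdiff.1 he
  refine hirr e heE (TransGen.of_map (fun p q hpq => ?_)
    (fun u v huv => reflTransGen_erase_of_collapse_eq hr hconn heS huv) hpath)
  obtain ⟨hne, hmem⟩ := mem_erase.1 hpq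
  obtain ⟨c, hc, hcpq⟩ := mem_image.1 hmem
  exact ⟨c.1, c.2, congrArg Prod.fst hcpq, congrArg Prod.snd hcpq,
    mem_erase.2 ⟨fun h => hne (h ▸ hcpq.symm), (mem_sdiff.1 hc).1⟩⟩

theorem Irredundant.contract (hE : E ⊆ V.offDiag) (hirr : Irredundant E) (hSV : S ⊆ V)
    {r : α} (hr : r ∈ S) (hconn : StronglyConnectedOn E S) :
    ∃ (V' : Finset α) (E' : Finset (α × α)), #V' + #S ≤ #V + 1 ∧ #E = #E' + #(E ∩ S ×ˢ S) ∧
      E' ⊆ V'.offDiag ∧ Irredundant E' := by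
  set g := collapse S r
  refine ⟨V.image g, (E \ S ×ˢ S).image (Prod.map g g), ?_, ?_, ?_, hirr.image_collapse hr hconn⟩
  · have hsub : V.image g ⊆ insert r (V \ S) := by
      intro y hy
      obtain ⟨x, hx, rfl⟩ := mem_image.1 hy
      by_cases hxS : x ∈ S <;> simp [g, collapse, hxS, hx]
    have := (card_le_card hsub).trans (card_insert_le _ _)
    have := card_le_card hSV
    rw [card_sdiff_of_subset hSV] at *
    omega
  · rw [card_image_of_injOn (hirr.injOn_collapse hr hconn), add_comm, card_inter_add_card_sdiff]
  · intro e' he'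
    obtain ⟨e, he, rfl⟩ := mem_image.1 he'
    obtain ⟨heE, heS⟩ := mem_sdiff.1 he
    obtain ⟨h1, h2, h12⟩ := mem_offDiag.1 (hE heE)
    refine mem_offDiag.2 ⟨mem_image_of_mem g h1, mem_image_of_mem g h2, fun h => ?_⟩
    rcases collapse_eq_collapse hr h with h | ⟨h1S, h2S⟩
    · exact h12 h
    · exact heS (mem_product.2 ⟨h1S, h2S⟩)

theorem bound_of_contraction {m k q e e' : ℕ} (hk : 2 ≤ k) (hkm : k ≤ m) (hq : q + k ≤ m + 1)
    (he : e ≤ e' + k) (h : e' + 2 ≤ 2 * q ∨ 4 * e' ≤ q ^ 2) :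
    e + 2 ≤ 2 * m ∨ 4 * e ≤ m ^ 2 := by
  rcases h with h | h
  · left; omega
  by_cases hq4 : q ≤ 3
  · left
    interval_cases q <;> omega
  · right
    have : q ^ 2 + 4 * k ≤ m ^ 2 := by nlinarith
    omega

theorem Irredundant.card_le (hE : E ⊆ V.offDiag) (hirr : Irredundant E) :
    #E + 2 ≤ 2 * #V ∨ 4 * #E ≤ #V ^ 2 := by
  induction hV : #V using Nat.strong_induction_on generalizing V E with
  | _ m ih =>
  by_cases hcyc : ∃ x, TransGen (Adj E) x x
  · obtain ⟨x, hx⟩ := hcyc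
    obtain ⟨S, hSV, hS2, hSin, hconn⟩ := hirr.exists_cycle hE hx
    obtain ⟨r, hr⟩ : S.Nonempty := card_pos.1 (by omega)
    obtain ⟨V', E', hV', hE', hE'V', hirr'⟩ := hirr.contract hE hSV hr hconn
    exact bound_of_contraction hS2 (hV ▸ card_le_card hSV) (hV ▸ hV') (by omega)
      (ih _ (by omega) hE'V' hirr' rfl)
  · exact .inr (hV ▸ hirr.four_mul_card_le_sq_of_acyclic hE (not_exists.1 hcyc))

theorem irredundant_image_of_sdiff_eq_singleton [Fintype α] {A B : α → Finset α}
    (hAB : ∀ i, A i \ B i = {i}) : Irredundant (univ.image fun i => (A i, B i)) := by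
  intro e he hpath
  obtain ⟨i, -, rfl⟩ := mem_image.1 he
  -- the element `i` can only be lost along the arc `A i → B i`
  have hstep : ∀ X Y, Adj ((univ.image fun j => (A j, B j)).erase (A i, B i)) X Y →
      i ∈ X → i ∈ Y := by
    intro X Y hXY hiX
    obtain ⟨hne, hmem⟩ := mem_erase.1 hXY
    obtain ⟨j, -, hj⟩ := mem_image.1 hmem
    obtain ⟨rfl, rfl⟩ := Prod.mk.inj hj
    by_contra hiY
    have hij : i ∈ A j \ B j := mem_sdiff.2 ⟨hiX, hiY⟩
    rw [hAB j, mem_singleton] at hij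
    exact hne (hij ▸ rfl)
  have hinv : ∀ {X Y}, TransGen (Adj ((univ.image fun j => (A j, B j)).erase (A i, B i))) X Y →
      i ∈ X → i ∈ Y := by
    intro X Y h
    induction h with
    | single h => exact hstep _ _ h
    | tail _ h ih => exact hstep _ _ h ∘ ih
  have hi : i ∈ A i \ B i := hAB i ▸ mem_singleton_self i
  exact (mem_sdiff.1 hi).2 (hinv hpath (mem_sdiff.1 hi).1)

end ArcSet

theorem separating_family_lower_bound_general (n : ℕ) (F : Finset (Finset (Fin n)))
    (hsep : ∀ i : Fin n, ∃ A ∈ F, ∃ B ∈ F, A \ B = {i}) :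
    2 * Real.sqrt ((n : ℝ) - 2) ≤ (F.card : ℝ) := by
  choose A hA B hB hAB using hsep
  set E := univ.image fun i => (A i, B i)
  have hcard : #E = n := by
    rw [card_image_of_injective _ fun i j h => ?_, card_univ, Fintype.card_fin]
    simpa [hAB] using congrArg (fun e => e.1 \ e.2) h
  have hEF : E ⊆ F.offDiag := by
    intro e he
    obtain ⟨i, -, rfl⟩ := mem_image.1 he
    have hi : i ∈ A i \ B i := hAB i ▸ mem_singleton_self i
    exact mem_offDiag.2
      ⟨hA i, hB i, fun h : A i = B i => (mem_sdiff.1 hi).2 (h ▸ (mem_sdiff.1 hi).1)⟩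
  have h4 : 4 * n ≤ #F ^ 2 + 8 := by
    rcases (ArcSet.irredundant_image_of_sdiff_eq_singleton hAB).card_le hEF with h | h <;>
      rw [hcard] at h <;> nlinarith [sq_nonneg ((#F : ℤ) - 4)]
  have h4' : (4 * n : ℝ) ≤ #F ^ 2 + 8 := by exact_mod_cast h4
  rw [← le_div_iff₀' two_pos, Real.sqrt_le_left (by positivity)]
  nlinarith

/-- If `n ≥ 2` and `F` is a family of subsets of `[n]` such that for every
`i ∈ [n]` there are `A, B ∈ F` with `A \ B = {i}`, then `|F| ≥ 2·√(n − 2)`. -/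
theorem separating_family_lower_bound (n : ℕ) (hn : 2 ≤ n) (F : Finset (Finset (Fin n)))
    (hsep : ∀ i : Fin n, ∃ A ∈ F, ∃ B ∈ F, A \ B = {i}) :
    2 * Real.sqrt ((n : ℝ) - 2) ≤ (F.card : ℝ) :=
  separating_family_lower_bound_general n F hsep
end

section
/- Let P be a finite nonempty poset with |P| = k, and let A_1, ..., A_k be pairwise distinct subsets of [w*(P)], each of size at most h*(P), which form an induced copy of P under inclusion. Then for every a ∈ [w*(P)] there exist indices i, j ∈ [k] such that A_i \ A_j = {a}. -/
/-!
If no two sets of the copy differ exactly in `{a}`, then deleting `a` from every set still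
reflects inclusion: `s.erase a ⊆ t.erase a` gives `s \ t ⊆ {a}`, hence `s \ t = ∅`. Relabelling
`[w*(P)] \ {a}` as `[w*(P) - 1]` via `Fin.succAbove a` then yields an induced copy of `P` of the
same height in a smaller cube, contradicting the minimality of `w*(P)`.
-/

open Finset

theorem Finset.subset_of_erase_subset_erase {α : Type*} [DecidableEq α] {s t : Finset α} {a : α}
    (hst : s.erase a ⊆ t.erase a) (hsep : s \ t ≠ {a}) : s ⊆ t := by
  have hsub : s \ t ⊆ {a} := sdiff_le_iff'.2 <| by
    rw [sup_eq_union, ← insert_eq, subset_insert_iff]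
    exact hst.trans (erase_subset a t)
  rw [← sdiff_eq_empty_iff_subset]
  exact (subset_singleton_iff.1 hsub).resolve_right hsep

theorem Fin.preimage_succAbove_subset_iff {n : ℕ} (a : Fin (n + 1)) {s t : Finset (Fin (n + 1))} :
    s.preimage a.succAbove a.succAbove_right_injective.injOn ⊆
        t.preimage a.succAbove a.succAbove_right_injective.injOn ↔ s.erase a ⊆ t.erase a := by
  simp [subset_iff, Fin.forall_iff_succAbove a, Fin.succAbove_ne]

theorem embedsLow_of_le_iff_subset {P : Type*} [PartialOrder P] {n h : ℕ}
    (f : P → Finset (Fin n)) (hcard : ∀ p, (f p).card ≤ h) (hiso : ∀ p q, p ≤ q ↔ f p ⊆ f q) :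
    EmbedsLow P n h :=
  ⟨f, fun p q hpq => le_antisymm ((hiso p q).2 hpq.le) ((hiso q p).2 hpq.ge), hcard, hiso⟩

theorem embedsLow_pred_of_forall_sdiff_ne {P : Type*} [PartialOrder P] {n h : ℕ}
    (f : P → Finset (Fin n)) (hcard : ∀ p, (f p).card ≤ h) (hiso : ∀ p q, p ≤ q ↔ f p ⊆ f q)
    (a : Fin n) (hsep : ∀ p q, f p \ f q ≠ {a}) : EmbedsLow P (n - 1) h := by
  obtain _ | n := n
  · exact a.elim0
  refine embedsLow_of_le_iff_subset (fun p => (f p).preimage a.succAbove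
    a.succAbove_right_injective.injOn) (fun p => ?_) (fun p q => ?_)
  · exact (card_le_card_of_injOn _ (fun x hx => mem_preimage.1 hx)
      a.succAbove_right_injective.injOn).trans (hcard p)
  · rw [Fin.preimage_succAbove_subset_iff, hiso]
    exact ⟨erase_subset_erase a, fun hpq => subset_of_erase_subset_erase hpq (hsep p q)⟩

theorem optimal_embedding_separates_general (P : Type*) [PartialOrder P]
    (f : P → Finset (Fin (cubeWidth P)))
    (hcard : ∀ p, (f p).card ≤ cubeHeight P)
    (hiso : ∀ p q, p ≤ q ↔ f p ⊆ f q) :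
    ∀ a : Fin (cubeWidth P), ∃ p q : P, f p \ f q = {a} := by
  intro a
  by_contra! hsep
  have hle : cubeWidth P ≤ cubeWidth P - 1 :=
    Nat.sInf_le (embedsLow_pred_of_forall_sdiff_ne f hcard hiso a hsep)
  have hpos : 0 < cubeWidth P := a.pos
  omega

/-- Any optimal cube-height embedding of a finite nonempty poset `P`
(distinct sets `A_1, …, A_k ⊆ [w*(P)]`, `k = |P|`, each of size at most
`h*(P)`, inducing a copy of `P` under inclusion) separates its ground set:
for every `a ∈ [w*(P)]` there are `i, j` with `A_i \ A_j = {a}`. -/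
theorem optimal_embedding_separates (P : Type*) [PartialOrder P] [Fintype P] [Nonempty P]
    (f : P → Finset (Fin (cubeWidth P))) (hinj : Function.Injective f)
    (hcard : ∀ p, (f p).card ≤ cubeHeight P)
    (hiso : ∀ p q, p ≤ q ↔ f p ⊆ f q) :
    ∀ a : Fin (cubeWidth P), ∃ p q : P, f p \ f q = {a} :=
  optimal_embedding_separates_general P f hcard hiso
end

section
/- For every t ≥ 1, let P_t be the poset on the 2t elements a_1, b_1, ..., a_t, b_t in which a_i and b_i are incomparable for each i, and x ≺ y whenever x ∈ {a_i, b_i}, y ∈ {a_j, b_j} and i < j. Then the poset of all subsets of [2t−1] ordered by inclusion contains no induced copy of P_t, while the poset of all subsets of [2t] ordered by inclusion does contain an induced copy of P_t. -/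
/-- The poset `Q_n` (all subsets of `[n]` ordered by inclusion) contains an
induced copy of the poset `P`. -/
def FullEmbed (P : Type*) [PartialOrder P] (n : ℕ) : Prop :=
  ∃ f : P → Finset (Fin n), Function.Injective f ∧ ∀ p q, p ≤ q ↔ f p ⊆ f q

/-- The poset `P_t` on `2t` elements `a_1, b_1, …, a_t, b_t`: the element with
index `(i, x)` is `a_i` if `x = 0` and `b_i` if `x = 1`. -/
@[ext]
structure PosetPt (t : ℕ) where
  i : Fin t
  j : Fin 2

/-- `a_i` and `b_i` are incomparable for each `i`, and `x ≺ y` whenever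
`x ∈ {a_i, b_i}`, `y ∈ {a_j, b_j}` and `i < j`. -/
instance (t : ℕ) : PartialOrder (PosetPt t) where
  le p q := p = q ∨ p.i < q.i
  le_refl p := Or.inl rfl
  le_trans p q r h1 h2 := by
    rcases h1 with rfl | h1
    · exact h2
    · rcases h2 with rfl | h2
      · exact Or.inr h1
      · exact Or.inr (lt_trans h1 h2)
  le_antisymm p q h1 h2 := by
    rcases h1 with rfl | h1
    · rfl
    · rcases h2 with rfl | h2
      · rfl
      · exact absurd (lt_trans h1 h2) (lt_irrefl _)

/-!
For an induced copy `f` of `P_t` among the subsets of `α`, the incomparability of `a_i` and `b_i`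
makes `f a_i ∩ f b_i ⊂ f a_i ⊂ f a_i ∪ f b_i` a strict chain of length two, and these chains
stack, since `f a_i ∪ f b_i ⊆ f a_{i+1} ∩ f b_{i+1}`. Hence `f a_{t-1} ∪ f b_{t-1}` has at least
`2t` elements. Conversely, `a_i ↦ {0, …, 2i-1, 2i}` and `b_i ↦ {0, …, 2i-1, 2i+1}` is an induced
copy of `P_t` in `Q_{2t}`.
-/

theorem fullEmbed_iff_nonempty_orderEmbedding (P : Type*) [PartialOrder P] (n : ℕ) :
    FullEmbed P n ↔ Nonempty (P ↪o Finset (Fin n)) :=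
  ⟨fun ⟨f, _, hf⟩ => ⟨OrderEmbedding.ofMapLEIff f fun p q => (hf p q).symm⟩,
    fun ⟨e⟩ => ⟨e, e.injective, fun _ _ => e.le_iff_le.symm⟩⟩

open Finset

theorem Finset.card_inter_add_two_le_card_union {α : Type*} [DecidableEq α] {s t : Finset α}
    (hst : ¬ s ⊆ t) (hts : ¬ t ⊆ s) : #(s ∩ t) + 2 ≤ #(s ∪ t) := by
  have hs : #(s ∩ t) < #s := card_lt_card (inf_lt_left.2 hst)
  have ht : #(s ∩ t) < #t := card_lt_card (inf_lt_right.2 hts)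
  have := card_union_add_card_inter s t
  omega

namespace PosetPt

variable {t : ℕ}

theorem not_le_of_i_eq_of_ne {p q : PosetPt t} (hi : p.i = q.i) (hne : p ≠ q) : ¬ p ≤ q := by
  rintro (h | h)
  · exact hne h
  · exact h.ne hi

section Embedding

variable {α : Type*}

theorem not_subset_of_orderEmbedding_of_i_eq (e : PosetPt t ↪o Finset α) {p q : PosetPt t}
    (hi : p.i = q.i) (hne : p ≠ q) : ¬ e p ⊆ e q :=
  fun h => not_le_of_i_eq_of_ne hi hne (e.le_iff_le.1 h)

theorem card_inter_add_two_le_card_union_of_orderEmbedding [DecidableEq α]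
    (e : PosetPt t ↪o Finset α) (i : Fin t) :
    #(e ⟨i, 0⟩ ∩ e ⟨i, 1⟩) + 2 ≤ #(e ⟨i, 0⟩ ∪ e ⟨i, 1⟩) :=
  card_inter_add_two_le_card_union
    (not_subset_of_orderEmbedding_of_i_eq e rfl (by simp [PosetPt.ext_iff]))
    (not_subset_of_orderEmbedding_of_i_eq e rfl (by simp [PosetPt.ext_iff]))

theorem union_subset_inter_of_orderEmbedding [DecidableEq α] (e : PosetPt t ↪o Finset α)
    {i j : Fin t} (h : i < j) :
    e ⟨i, 0⟩ ∪ e ⟨i, 1⟩ ⊆ e ⟨j, 0⟩ ∩ e ⟨j, 1⟩ :=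
  union_subset (subset_inter (e.monotone (Or.inr h)) (e.monotone (Or.inr h)))
    (subset_inter (e.monotone (Or.inr h)) (e.monotone (Or.inr h)))

theorem two_mul_le_card_inter_of_orderEmbedding [DecidableEq α] (e : PosetPt t ↪o Finset α)
    (i : Fin t) : 2 * i ≤ #(e ⟨i, 0⟩ ∩ e ⟨i, 1⟩) := by
  obtain ⟨n, hn⟩ := i
  induction n with
  | zero => simp
  | succ m ih =>
    let i : Fin t := ⟨m, by omega⟩
    have hi : i < ⟨m + 1, hn⟩ := Fin.mk_lt_mk.2 m.lt_succ_self
    calc 2 * (m + 1) ≤ #(e ⟨i, 0⟩ ∩ e ⟨i, 1⟩) + 2 := Nat.add_le_add_right (ih _) 2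
      _ ≤ #(e ⟨i, 0⟩ ∪ e ⟨i, 1⟩) :=
        card_inter_add_two_le_card_union_of_orderEmbedding e i
      _ ≤ _ := card_le_card (union_subset_inter_of_orderEmbedding e hi)

theorem two_mul_le_card_of_orderEmbedding [Fintype α] (e : PosetPt t ↪o Finset α)
    (ht : 1 ≤ t) : 2 * t ≤ Fintype.card α := by
  classical
  let i : Fin t := ⟨t - 1, by omega⟩
  calc 2 * t = 2 * i + 2 := by simp only [i]; omega
    _ ≤ #(e ⟨i, 0⟩ ∩ e ⟨i, 1⟩) + 2 :=
      Nat.add_le_add_right (two_mul_le_card_inter_of_orderEmbedding e i) 2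
    _ ≤ #(e ⟨i, 0⟩ ∪ e ⟨i, 1⟩) := card_inter_add_two_le_card_union_of_orderEmbedding e i
    _ ≤ Fintype.card α := card_le_univ _

end Embedding

def toFinset (p : PosetPt t) : Finset (Fin (2 * t)) :=
  {k | (k : ℕ) < 2 * p.i ∨ (k : ℕ) = 2 * p.i + p.j}

theorem mem_toFinset {p : PosetPt t} {k : Fin (2 * t)} :
    k ∈ p.toFinset ↔ (k : ℕ) < 2 * p.i ∨ (k : ℕ) = 2 * p.i + p.j := by
  simp [toFinset]

theorem toFinset_subset_iff (p q : PosetPt t) : p.toFinset ⊆ q.toFinset ↔ p ≤ q := by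
  have hp := p.j.isLt
  have hq := q.j.isLt
  constructor
  · intro h
    have hk : 2 * (p.i : ℕ) + p.j < 2 * t := by omega
    have hmem : (⟨_, hk⟩ : Fin (2 * t)) ∈ q.toFinset := h (mem_toFinset.2 (Or.inr rfl))
    rw [mem_toFinset, Fin.val_mk] at hmem
    rcases hmem with hlt | heq
    · exact Or.inr (Fin.lt_def.2 (by omega))
    · exact Or.inl (PosetPt.ext (Fin.ext (by omega)) (Fin.ext (by omega)))
  · rintro (rfl | h)
    · exact Subset.rfl
    · intro k hk
      have := Fin.lt_def.1 h
      exact mem_toFinset.2 (Or.inl (by rcases mem_toFinset.1 hk with hk | hk <;> omega))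

def orderEmbeddingFinset (t : ℕ) : PosetPt t ↪o Finset (Fin (2 * t)) :=
  OrderEmbedding.ofMapLEIff toFinset toFinset_subset_iff

end PosetPt

/-- For every `t ≥ 1`, the poset `P_t` has no induced copy in the poset of
subsets of `[2t − 1]`, but it does have one in the poset of subsets of `[2t]`. -/
theorem posetPt_embeds_iff (t : ℕ) (ht : 1 ≤ t) :
    ¬ FullEmbed (PosetPt t) (2 * t - 1) ∧ FullEmbed (PosetPt t) (2 * t) := by
  simp only [fullEmbed_iff_nonempty_orderEmbedding]
  refine ⟨fun ⟨e⟩ => ?_, ⟨PosetPt.orderEmbeddingFinset t⟩⟩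
  have := PosetPt.two_mul_le_card_of_orderEmbedding e ht
  simp only [Fintype.card_fin] at this
  omega
end

section
/- For every k ≥ 2 there exists n₀ such that for all n ≥ n₀, the induced saturation number of the antichain A_k on k elements satisfies sat*(n, A_k) ≤ (k−1)(n−1) + 2. -/
/-- A family `F` of subsets of `[n]` contains an induced copy of the poset `P`
if there is an injective map `f` from `P` into `F` such that
`p ≤ q` in `P` iff `f p ⊆ f q`. -/
def HasCopy (P : Type*) [PartialOrder P] {n : ℕ} (F : Finset (Finset (Fin n))) : Prop :=
  ∃ f : P → Finset (Fin n), Function.Injective f ∧ (∀ p, f p ∈ F) ∧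
    ∀ p q, p ≤ q ↔ f p ⊆ f q

/-- `F` is `P`-saturated: it contains no induced copy of `P`, but adding any
other subset of `[n]` creates an induced copy of `P`. -/
def IsSat (P : Type*) [PartialOrder P] {n : ℕ} (F : Finset (Finset (Fin n))) : Prop :=
  ¬ HasCopy P F ∧ ∀ S : Finset (Fin n), S ∉ F → HasCopy P (insert S F)

/-- The induced saturation number `sat*(n, P)`: the minimum size of a
`P`-saturated family of subsets of `[n]`. -/
noncomputable def satNum (n : ℕ) (P : Type*) [PartialOrder P] : ℕ :=
  sInf {m | ∃ F : Finset (Finset (Fin n)), IsSat P F ∧ F.card = m}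

/-!
Let `r = k - 1` and split `[n]` into `X = [0, r)` and `Y = [r, n)`. The family consists of `∅`,
`[n]` and `r` chains, the `i`-th one climbing from `{i}` to `{i} ∪ Y` by adding the elements of
`Y` one at a time, and then to `[n]` by growing a cyclic interval of `X` starting at `i`. It has
`2 + r (n - 1)` members and, being covered by `r` chains, no antichain of size `k`.

A set `S` outside the family is incomparable with `r` pairwise incomparable members, chosen
according to the trace `A = S ∩ X`. If `A = ∅`, take the singletons `{j}`. If `A = {v}`, replace
`{v}` by the member of chain `v` of size `|S|`. If `|A| ≥ 2` and `Y ⊆ S`, take the `r` sets `I ∪ Y`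
with `|I| = |A|`: they have the size of `S`. Otherwise take `{j} ∪ Y` for `j ∈ A` and `{j}` for
`j ∉ A`.
-/

open Finset

def HasAntichainOfCard {α : Type*} (F : Finset (Finset α)) (m : ℕ) : Prop :=
  ∃ G ⊆ F, IsAntichain (· ⊆ ·) (G : Set (Finset α)) ∧ #G = m

theorem IsAntichain.card_le_of_forall_exists_mem_isChain {α ι : Type*} {r : α → α → Prop}
    {G : Finset α} {s : Finset ι} {C : ι → Set α} (hG : IsAntichain r (G : Set α))
    (hC : ∀ i ∈ s, IsChain r (C i)) (hcover : ∀ g ∈ G, ∃ i ∈ s, g ∈ C i) : #G ≤ #s := by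
  rcases G.eq_empty_or_nonempty with rfl | ⟨g₀, hg₀⟩
  · simp
  obtain ⟨i₀, -⟩ := hcover g₀ hg₀
  have : Nonempty ι := ⟨i₀⟩
  choose! c hcs hcC using hcover
  refine card_le_card_of_injOn c hcs fun g hg g' hg' hcg => ?_
  exact inter_subsingleton_of_isAntichain_of_isChain hG (hC _ (hcs g hg)) ⟨hg, hcC g hg⟩
    ⟨hg', hcg ▸ hcC g' hg'⟩

theorem Finset.not_subset_and_not_subset_of_card_eq {α : Type*} {s t : Finset α} (hne : s ≠ t)
    (hst : #s = #t) : ¬ s ⊆ t ∧ ¬ t ⊆ s :=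
  ⟨fun h => hne (eq_of_subset_of_card_le h hst.ge),
    fun h => hne (eq_of_subset_of_card_le h hst.le).symm⟩

theorem hasAntichainOfCard_insert_of_pairwise_not_subset {α ι : Type*} [Fintype ι]
    [DecidableEq α] {F : Finset (Finset α)} {S : Finset α} (T : ι → Finset α)
    (hTF : ∀ j, T j ∈ F) (hT : Pairwise fun j j' => ¬ T j ⊆ T j')
    (hS : ∀ j, ¬ T j ⊆ S ∧ ¬ S ⊆ T j) :
    HasAntichainOfCard (insert S F) (Fintype.card ι + 1) := by
  have hinj : Function.Injective T := fun j j' h => by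
    by_contra hne
    exact hT hne h.le
  refine ⟨insert S (univ.image T), insert_subset_insert _ (image_subset_iff.2 fun j _ => hTF j),
    ?_, ?_⟩
  · rw [coe_insert, coe_image, coe_univ, Set.image_univ]
    refine isAntichain_insert.2 ⟨?_, ?_⟩
    · rintro _ ⟨j, rfl⟩ _ ⟨j', rfl⟩ hne
      exact hT (hinj.ne_iff.1 hne)
    · rintro _ ⟨j, rfl⟩ -
      exact (hS j).symm
  · rw [card_insert_of_notMem, card_image_of_injective _ hinj, card_univ]
    rintro hSmem
    obtain ⟨j, -, hj⟩ := mem_image.1 hSmem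
    exact (hS j).2 hj.ge

theorem hasCopy_iff_hasAntichainOfCard {P : Type*} [PartialOrder P] [Fintype P] {n : ℕ}
    (hP : ∀ a b : P, a ≤ b → a = b) (F : Finset (Finset (Fin n))) :
    HasCopy P F ↔ HasAntichainOfCard F (Fintype.card P) := by
  constructor
  · rintro ⟨f, hinj, hfF, hf⟩
    refine ⟨univ.image f, image_subset_iff.2 fun p _ => hfF p, ?_, ?_⟩
    · rintro _ hp _ hq hne hsub
      obtain ⟨p, -, rfl⟩ := mem_image.1 hp
      obtain ⟨q, -, rfl⟩ := mem_image.1 hq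
      exact hne (congrArg f (hP p q ((hf p q).2 hsub)))
    · rw [card_image_of_injective _ hinj, card_univ]
  · rintro ⟨G, hGF, hG, hcard⟩
    obtain ⟨e⟩ : Nonempty (P ≃ G) := ⟨Fintype.equivOfCardEq (by simp [hcard])⟩
    refine ⟨fun p => e p, Subtype.val_injective.comp e.injective, fun p => hGF (e p).2,
      fun p q => ⟨fun hpq => hP p q hpq ▸ subset_rfl, fun hsub => ?_⟩⟩
    by_contra hpq
    exact hG (e p).2 (e q).2 (fun h => hpq (e.injective (Subtype.ext h)).le) hsub

lemma card_filter_fin_val {n : ℕ} (p : ℕ → Prop) [DecidablePred p] :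
    #{x : Fin n | p x} = #{x ∈ range n | p x} := by
  rw [← card_map Fin.valEmbedding]
  congr 1
  ext x
  simpa using
    ⟨fun ⟨a, ha, hax⟩ => hax ▸ ⟨a.2, ha⟩, fun ⟨hx, hpx⟩ => ⟨⟨x, hx⟩, hpx, rfl⟩⟩

namespace AntichainSaturation

/- `lowSet n r i t = {i} ∪ [r, r + t)` and `highSet n r i ℓ = I ∪ Y`, where `I` is the cyclic
interval of `X` of length `ℓ` starting at `i`; the disjunct `x + r < i + ℓ` is its wrapped part. -/
def lowSet (n r i t : ℕ) : Finset (Fin n) :=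
  {x | x.val = i ∨ (r ≤ x.val ∧ x.val < r + t)}

def highSet (n r i ℓ : ℕ) : Finset (Fin n) :=
  {x | (x.val < r ∧ (i ≤ x.val ∧ x.val < i + ℓ ∨ x.val + r < i + ℓ)) ∨ r ≤ x.val}

def chain (n r i : ℕ) : Finset (Finset (Fin n)) :=
  (range (n - r)).image (lowSet n r i) ∪ (Ico 1 r).image (highSet n r i)

def family (n r : ℕ) : Finset (Finset (Fin n)) :=
  insert ∅ (insert univ ((range r).biUnion (chain n r)))

variable {n r i j t t' ℓ ℓ' : ℕ}

@[simp]
lemma mem_lowSet {x : Fin n} :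
    x ∈ lowSet n r i t ↔ x.val = i ∨ (r ≤ x.val ∧ x.val < r + t) := by
  simp [lowSet]

@[simp]
lemma mem_highSet {x : Fin n} : x ∈ highSet n r i ℓ ↔
    (x.val < r ∧ (i ≤ x.val ∧ x.val < i + ℓ ∨ x.val + r < i + ℓ)) ∨ r ≤ x.val := by
  simp [highSet]

lemma lowSet_mono (h : t ≤ t') : lowSet n r i t ⊆ lowSet n r i t' := by
  intro x; simp only [mem_lowSet]; omega

lemma highSet_mono (h : ℓ ≤ ℓ') : highSet n r i ℓ ⊆ highSet n r i ℓ' := by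
  intro x; simp only [mem_highSet]; omega

lemma lowSet_subset_highSet (hℓ : 1 ≤ ℓ) : lowSet n r i t ⊆ highSet n r i ℓ := by
  intro x; simp only [mem_lowSet, mem_highSet]; omega

lemma highSet_one (hi : i < r) : highSet n r i 1 = lowSet n r i (n - r) := by
  ext x; simp only [mem_lowSet, mem_highSet]; omega

lemma highSet_self : highSet n r i r = univ := by
  ext x; simp only [mem_highSet, mem_univ, iff_true]; omega

lemma highSet_mem_family (hi : i < r) (hℓ : 1 ≤ ℓ) (hℓr : ℓ ≤ r) :
    highSet n r i ℓ ∈ family n r := by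
  rcases hℓr.lt_or_eq with hℓr | rfl
  · simp only [family, chain, mem_insert, mem_biUnion, mem_union, mem_image, mem_Ico]
    exact .inr (.inr ⟨i, mem_range.2 hi, .inr ⟨ℓ, ⟨hℓ, hℓr⟩, rfl⟩⟩)
  · rw [highSet_self]
    exact mem_insert_of_mem (mem_insert_self _ _)

lemma lowSet_mem_family (hi : i < r) (ht : t ≤ n - r) : lowSet n r i t ∈ family n r := by
  rcases ht.lt_or_eq with ht | rfl
  · simp only [family, chain, mem_insert, mem_biUnion, mem_union, mem_image, mem_range]
    exact .inr (.inr ⟨i, hi, .inl ⟨t, ht, rfl⟩⟩)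
  · rw [← highSet_one hi]
    exact highSet_mem_family hi le_rfl (by omega)

lemma card_chain_le (hr : 1 ≤ r) (hrn : r ≤ n) : #(chain n r i) ≤ n - 1 := by
  calc #(chain n r i)
      ≤ #((range (n - r)).image (lowSet n r i)) + #((Ico 1 r).image (highSet n r i)) :=
        card_union_le _ _
    _ ≤ #(range (n - r)) + #(Ico 1 r) := add_le_add card_image_le card_image_le
    _ ≤ n - 1 := by simp only [card_range, Nat.card_Ico]; omega

lemma card_family_le (hrn : r ≤ n) : #(family n r) ≤ r * (n - 1) + 2 := by
  have hbiUnion : #((range r).biUnion (chain n r)) ≤ r * (n - 1) := by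
    simpa using card_biUnion_le_card_mul (range r) (chain n r) (n - 1)
      fun i hi => card_chain_le (by simp at hi; omega) hrn
  calc #(family n r) ≤ #((range r).biUnion (chain n r)) + 2 :=
        (card_insert_le _ _).trans (Nat.add_le_add_right (card_insert_le _ _) 1)
    _ ≤ r * (n - 1) + 2 := by omega

lemma isChain_chain :
    IsChain (· ⊆ ·) (↑(insert ∅ (insert univ (chain n r i))) : Set (Finset (Fin n))) := by
  rw [coe_insert, coe_insert]
  refine IsChain.insert (IsChain.insert ?_ fun _ _ _ => .inr (subset_univ _))
    fun _ _ _ => .inl (empty_subset _)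
  rintro _ hT _ hT' -
  simp only [chain, coe_union, coe_image, coe_range, coe_Ico, Set.mem_union, Set.mem_image]
    at hT hT'
  rcases hT with ⟨t, -, rfl⟩ | ⟨ℓ, hℓ, rfl⟩ <;>
    rcases hT' with ⟨t', -, rfl⟩ | ⟨ℓ', hℓ', rfl⟩
  · exact (le_total t t').imp lowSet_mono lowSet_mono
  · exact .inl (lowSet_subset_highSet hℓ'.1)
  · exact .inr (lowSet_subset_highSet hℓ.1)
  · exact (le_total ℓ ℓ').imp highSet_mono highSet_mono

lemma not_hasAntichainOfCard_family {m : ℕ} (hr : 1 ≤ r) (hrm : r < m) :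
    ¬ HasAntichainOfCard (family n r) m := by
  rintro ⟨G, hGF, hG, rfl⟩
  have hcover : ∀ T ∈ G, ∃ i ∈ range r,
      T ∈ (↑(insert ∅ (insert univ (chain n r i))) : Set (Finset (Fin n))) := by
    intro T hT
    have hT := hGF hT
    simp only [family, mem_insert, mem_biUnion, mem_range] at hT
    rcases hT with rfl | rfl | ⟨i, hi, hT⟩
    · exact ⟨0, mem_range.2 hr, by simp⟩
    · exact ⟨0, mem_range.2 hr, by simp⟩
    · exact ⟨i, mem_range.2 hi, by simp [hT]⟩
  have := hG.card_le_of_forall_exists_mem_isChain (fun _ _ => isChain_chain) hcover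
  rw [card_range] at this
  omega

lemma not_lowSet_subset_lowSet (hij : i ≠ j) (hi : i < r) (hrn : r ≤ n) :
    ¬ lowSet n r i t ⊆ lowSet n r j t' := by
  intro h
  have := @h ⟨i, by omega⟩ (by simp)
  simp only [mem_lowSet] at this
  omega

lemma not_highSet_subset_highSet (hij : i ≠ j) (hi : i < r) (hj : j < r) (hℓ : 1 ≤ ℓ)
    (hℓr : ℓ < r) (hrn : r ≤ n) : ¬ highSet n r i ℓ ⊆ highSet n r j ℓ := by
  intro h
  obtain ⟨w, hw⟩ : ∃ w < r, (i ≤ w ∧ w < i + ℓ ∨ w + r < i + ℓ) ∧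
      ¬(j ≤ w ∧ w < j + ℓ ∨ w + r < j + ℓ) :=
    ⟨if i < j then (if ℓ + j ≤ r + i then i else ℓ + j - r)
      else if ℓ + j ≤ i then i else if ℓ + j < r then ℓ + j else ℓ + j - r,
      by split_ifs <;> omega⟩
  have := @h ⟨w, by omega⟩
  simp only [mem_highSet] at this
  omega

lemma card_lowSet (hi : i < r) (hrt : r + t ≤ n) : #(lowSet n r i t) = t + 1 := by
  rw [lowSet, card_filter_fin_val (fun x => x = i ∨ (r ≤ x ∧ x < r + t))]
  have : {x ∈ range n | x = i ∨ (r ≤ x ∧ x < r + t)} = insert i (Ico r (r + t)) := by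
    ext x; simp only [mem_filter, mem_range, mem_insert, mem_Ico]; omega
  rw [this, card_insert_of_notMem (by simp; omega), Nat.card_Ico]
  omega

lemma card_highSet (hi : i < r) (hℓr : ℓ ≤ r) (hrn : r ≤ n) :
    #(highSet n r i ℓ) = ℓ + (n - r) := by
  rw [highSet, card_filter_fin_val
    (fun x => (x < r ∧ (i ≤ x ∧ x < i + ℓ ∨ x + r < i + ℓ)) ∨ r ≤ x)]
  have : {x ∈ range n | (x < r ∧ (i ≤ x ∧ x < i + ℓ ∨ x + r < i + ℓ)) ∨ r ≤ x}
      = (Ico i (min (i + ℓ) r) ∪ range (i + ℓ - r)) ∪ Ico r n := by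
    ext x; simp only [mem_filter, mem_range, mem_union, mem_Ico]; omega
  rw [this, card_union_of_disjoint, card_union_of_disjoint] <;>
    simp only [Nat.card_Ico, card_range, disjoint_left, mem_Ico, mem_range, mem_union]
  · omega
  · intro x hx; omega
  · intro x hx; omega

lemma card_filter_le_val : #{x : Fin n | r ≤ x.val} = n - r := by
  rw [card_filter_fin_val (r ≤ ·)]
  have : {x ∈ range n | r ≤ x} = Ico r n := by
    ext x; simp only [mem_filter, mem_range, mem_Ico]; omega
  rw [this, Nat.card_Ico]

variable {S : Finset (Fin n)}

lemma hasAntichainOfCard_of_lowSet (hrn : r ≤ n) (t : ℕ → ℕ) (ht : ∀ j < r, t j ≤ n - r)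
    (hS : ∀ j < r, ¬ lowSet n r j (t j) ⊆ S ∧ ¬ S ⊆ lowSet n r j (t j)) :
    HasAntichainOfCard (insert S (family n r)) (r + 1) := by
  simpa using hasAntichainOfCard_insert_of_pairwise_not_subset
    (fun j : Fin r => lowSet n r j (t j)) (fun j => lowSet_mem_family j.2 (ht j j.2))
    (fun j j' h => not_lowSet_subset_lowSet (Fin.val_ne_of_ne h) j.2 hrn) fun j => hS j j.2

lemma hasAntichainOfCard_of_trace_eq_empty (hrn : r ≤ n) (hS0 : S.Nonempty)
    (hA : {x ∈ S | x.val < r} = ∅) : HasAntichainOfCard (insert S (family n r)) (r + 1) := by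
  have hSY : ∀ x ∈ S, r ≤ x.val := fun x hx => by
    by_contra hxr
    exact (filter_eq_empty_iff.1 hA hx) (by omega)
  obtain ⟨y, hy⟩ := hS0
  refine hasAntichainOfCard_of_lowSet hrn (fun _ => 0) (fun _ _ => Nat.zero_le _) fun j hj =>
    ⟨fun h => ?_, fun h => ?_⟩
  · have := hSY _ (@h ⟨j, by omega⟩ (by simp))
    simp only at this
    omega
  · have := h hy
    have := hSY y hy
    simp only [mem_lowSet] at *
    omega

lemma hasAntichainOfCard_of_trace_eq_singleton (hrn : r ≤ n) (hSF : S ∉ family n r)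
    {v : Fin n} (hA : {x ∈ S | x.val < r} = {v}) :
    HasAntichainOfCard (insert S (family n r)) (r + 1) := by
  have hmem : ∀ x, x ∈ S ∧ x.val < r ↔ x = v := fun x => by
    rw [← mem_singleton, ← hA, mem_filter]
  obtain ⟨hvS, hvr⟩ := (hmem v).2 rfl
  have hSv : S ⊆ lowSet n r v (n - r) := fun x hx => by
    by_cases hxr : x.val < r
    · simp [(hmem x).1 ⟨hx, hxr⟩]
    · simp only [mem_lowSet]; omega
  have hS1 : 1 ≤ #S := card_pos.2 ⟨v, hvS⟩
  have hSr : #S - 1 ≤ n - r := by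
    have := card_le_card hSv
    rw [card_lowSet hvr (by omega)] at this
    omega
  have hv : ¬ lowSet n r v (#S - 1) ⊆ S ∧ ¬ S ⊆ lowSet n r v (#S - 1) :=
    not_subset_and_not_subset_of_card_eq (fun h => hSF (h ▸ lowSet_mem_family hvr hSr))
      (by rw [card_lowSet hvr (by omega)]; omega)
  refine hasAntichainOfCard_of_lowSet hrn (fun j => if j = v then #S - 1 else 0)
    (fun j _ => by split_ifs <;> omega) fun j hj => ?_
  split_ifs with hjv
  · exact hjv ▸ hv
  · refine ⟨fun h => hjv ?_, fun h => ?_⟩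
    · have := (hmem _).1 ⟨@h ⟨j, by omega⟩ (by simp), hj⟩
      rw [← this]
    · have := h hvS
      simp only [mem_lowSet] at this
      omega

lemma card_trace_lt (hSF : S ∉ family n r) (hY : ∀ x : Fin n, r ≤ x.val → x ∈ S) :
    #{x ∈ S | x.val < r} < r := by
  have hsub : {x ∈ S | x.val < r} ⊆ ({x | x.val < r} : Finset (Fin n)) :=
    filter_subset_filter _ (subset_univ S)
  have hX : #{x : Fin n | x.val < r} ≤ r := Fin.card_filter_val_lt.trans_le (min_le_right _ _)
  refine ((card_le_card hsub).trans hX).lt_of_ne fun hA => hSF ?_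
  have hAX := eq_of_subset_of_card_le hsub (hX.trans hA.ge)
  suffices S = univ from this ▸ mem_insert_of_mem (mem_insert_self _ _)
  refine eq_univ_of_forall fun x => ?_
  by_cases hxr : x.val < r
  · exact (mem_filter.1 (hAX ▸ mem_filter.2 ⟨mem_univ x, hxr⟩)).1
  · exact hY x (by omega)

lemma hasAntichainOfCard_of_forall_le_mem (hrn : r ≤ n) (hSF : S ∉ family n r)
    (hY : ∀ x : Fin n, r ≤ x.val → x ∈ S) (hA : 1 ≤ #{x ∈ S | x.val < r}) :
    HasAntichainOfCard (insert S (family n r)) (r + 1) := by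
  have hAr := card_trace_lt hSF hY
  set ℓ := #{x ∈ S | x.val < r}
  have hS : #S = ℓ + (n - r) := by
    rw [← card_filter_le_val, ← card_filter_add_card_filter_not (fun x : Fin n => x.val < r)]
    congr 2
    ext x
    simp only [mem_filter, mem_univ, true_and, not_lt]
    exact ⟨And.right, fun hx => ⟨hY x hx, hx⟩⟩
  simpa using hasAntichainOfCard_insert_of_pairwise_not_subset
    (fun j : Fin r => highSet n r j ℓ) (fun j => highSet_mem_family j.2 hA hAr.le)
    (fun j j' h => not_highSet_subset_highSet (Fin.val_ne_of_ne h) j.2 j'.2 hA hAr hrn)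
    fun j => not_subset_and_not_subset_of_card_eq
      (fun h : highSet n r j ℓ = S => hSF (h ▸ highSet_mem_family j.2 hA hAr.le))
      (by rw [card_highSet j.2 hAr.le hrn, hS])

lemma hasAntichainOfCard_of_one_lt_card_trace (hrn : r ≤ n) (hA : 1 < #{x ∈ S | x.val < r})
    {y : Fin n} (hyr : r ≤ y.val) (hy : y ∉ S) :
    HasAntichainOfCard (insert S (family n r)) (r + 1) := by
  obtain ⟨x, hx, x', hx', hxx'⟩ := one_lt_card.1 hA
  rw [mem_filter] at hx hx'
  refine hasAntichainOfCard_of_lowSet hrn (fun j => if j ∈ S.image Fin.val then n - r else 0)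
    (fun j _ => by split_ifs <;> omega) fun j hj => ?_
  split_ifs with hjS
  · refine ⟨fun h => hy (h (by simp only [mem_lowSet]; omega)), fun h => ?_⟩
    have h₁ := h hx.1
    have h₂ := h hx'.1
    simp only [mem_lowSet] at h₁ h₂
    exact hxx' (Fin.ext (by omega))
  · refine ⟨fun h => hjS (mem_image.2 ⟨_, @h ⟨j, by omega⟩ (by simp), rfl⟩),
      fun h => ?_⟩
    have h₁ := h hx.1
    simp only [mem_lowSet] at h₁
    exact hjS (mem_image.2 ⟨x, hx.1, by omega⟩)

lemma hasAntichainOfCard_insert_family (hrn : r ≤ n) (hSF : S ∉ family n r) :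
    HasAntichainOfCard (insert S (family n r)) (r + 1) := by
  rcases Nat.lt_or_ge #{x ∈ S | x.val < r} 2 with hA | hA
  · interval_cases h : #{x ∈ S | x.val < r}
    · refine hasAntichainOfCard_of_trace_eq_empty hrn ?_ (card_eq_zero.1 h)
      exact nonempty_iff_ne_empty.2 fun h => hSF (h ▸ mem_insert_self _ _)
    · obtain ⟨v, hv⟩ := card_eq_one.1 h
      exact hasAntichainOfCard_of_trace_eq_singleton hrn hSF hv
  · by_cases hY : ∀ x : Fin n, r ≤ x.val → x ∈ S
    · exact hasAntichainOfCard_of_forall_le_mem hrn hSF hY (by omega)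
    · push Not at hY
      obtain ⟨y, hyr, hy⟩ := hY
      exact hasAntichainOfCard_of_one_lt_card_trace hrn hA hyr hy

end AntichainSaturation

open AntichainSaturation in
/-- For every `k ≥ 2` there is `n₀` such that for all `n ≥ n₀`, the induced
saturation number of the antichain `A_k` on `k` elements (a poset of size `k`
with no two distinct elements comparable) satisfies
`sat*(n, A_k) ≤ (k − 1)(n − 1) + 2`. -/
theorem sat_antichain_upper (k : ℕ) (hk : 2 ≤ k) (P : Type*) [PartialOrder P] [Fintype P]
    (hcard : Fintype.card P = k) (hanti : ∀ a b : P, a ≤ b → a = b) :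
    ∃ n₀ : ℕ, ∀ n : ℕ, n₀ ≤ n → satNum n P ≤ (k - 1) * (n - 1) + 2 := by
  refine ⟨k - 1, fun n hn => ?_⟩
  have hk1 : k - 1 + 1 = k := by omega
  have hsat : IsSat P (family n (k - 1)) := by
    simp only [IsSat, hasCopy_iff_hasAntichainOfCard hanti, hcard]
    refine ⟨not_hasAntichainOfCard_family (by omega) (by omega), fun S hS => ?_⟩
    exact hk1 ▸ hasAntichainOfCard_insert_family hn hS
  calc satNum n P ≤ #(family n (k - 1)) := Nat.sInf_le ⟨_, hsat, rfl⟩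
    _ ≤ (k - 1) * (n - 1) + 2 := card_family_le hn
end
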